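/- arXiv:2605.12456 — 4 statements merged into one kernel-verified Lean document; each statement's English description precedes it below -/
import Mathlib

section
/- For p in (0,1], the integral from 0 to 1 of -(1/p) r^{1/p - 1} ln(1 - r) dr equals the generalized harmonic number H_{1/p} = sum_{n>=1} (1/n - 1/(n + 1/p)). -/
/-!
Expanding `-log (1 - r) = ∑ₙ rⁿ⁺¹ / (n + 1)` turns the integrand into a series of nonnegative
powers `a / (n + 1) * r ^ (a + n)`, whose integrals over `(0, 1)` are
`a / ((n + 1) (n + 1 + a)) = 1 / (n + 1) - 1 / (n + 1 + a)`. These are summable, being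
`O(1 / n²)`, so the integral and the sum may be interchanged.
-/

open MeasureTheory Real Set

lemma integral_Ioo_zero_one_rpow {e : ℝ} (he : -1 < e) :
    ∫ r in Ioo (0 : ℝ) 1, r ^ e = 1 / (e + 1) := by
  rw [← integral_Ioc_eq_integral_Ioo, ← intervalIntegral.integral_of_le zero_le_one,
    integral_rpow (Or.inl he), one_rpow, zero_rpow (by linarith)]
  ring

lemma one_div_sub_one_div_add {x a : ℝ} (hx : x ≠ 0) (hxa : x + a ≠ 0) :
    1 / x - 1 / (x + a) = a / (x * (x + a)) := by
  field_simp
  ring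

lemma summable_one_div_nat_succ_sub_one_div_add {a : ℝ} (ha : 0 ≤ a) :
    Summable fun n : ℕ => 1 / (n + 1 : ℝ) - 1 / ((n + 1 : ℝ) + a) := by
  have hsq : Summable fun n : ℕ => a * (1 / ((n : ℝ) + 1) ^ 2) := by
    refine Summable.mul_left _ ?_
    simpa using (summable_nat_add_iff 1).2 (Real.summable_one_div_nat_pow.2 one_lt_two)
  refine hsq.of_nonneg_of_le (fun n => ?_) (fun n => ?_) <;>
    rw [one_div_sub_one_div_add (by positivity) (by positivity)]
  · positivity
  · rw [mul_one_div, sq]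
    exact div_le_div_of_nonneg_left ha (by positivity)
      (mul_le_mul_of_nonneg_left (le_add_of_nonneg_right ha) (by positivity))

lemma hasSum_rpow_mul_neg_log_one_sub (a : ℝ) {r : ℝ} (hr : r ∈ Ioo (0 : ℝ) 1) :
    HasSum (fun n : ℕ => a / (n + 1) * r ^ (a + n)) (-(a * r ^ (a - 1) * log (1 - r))) := by
  have hlog := (hasSum_pow_div_log_of_abs_lt_one (abs_lt.2 ⟨by linarith [hr.1], hr.2⟩)).mul_left
    (a * r ^ (a - 1))
  rw [mul_neg] at hlog
  refine hlog.congr_fun fun n => ?_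
  have hpow : r ^ (a + n) = r ^ (a - 1) * r ^ (n + 1) := by
    rw [← rpow_natCast, ← rpow_add hr.1]
    push_cast
    ring_nf
  rw [hpow]
  ring

lemma integrableOn_rpow_term {a : ℝ} (ha : -1 < a) (n : ℕ) :
    IntegrableOn (fun r : ℝ => a / (n + 1) * r ^ (a + n)) (Ioo 0 1) :=
  ((intervalIntegral.integrableOn_Ioo_rpow_iff zero_lt_one).2
    (by linarith [n.cast_nonneg (α := ℝ)])).const_mul _

lemma integral_rpow_term {a : ℝ} (ha : -1 < a) (n : ℕ) :
    ∫ r in Ioo (0 : ℝ) 1, a / (n + 1) * r ^ (a + n) =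
      1 / (n + 1 : ℝ) - 1 / ((n + 1 : ℝ) + a) := by
  have hn : (0 : ℝ) ≤ n := n.cast_nonneg
  rw [integral_const_mul, integral_Ioo_zero_one_rpow (by linarith),
    one_div_sub_one_div_add (by positivity) (by linarith)]
  field_simp
  ring

theorem integral_neg_rpow_mul_log_one_sub {a : ℝ} (ha : 0 ≤ a) :
    ∫ r in Ioo (0 : ℝ) 1, -(a * r ^ (a - 1) * log (1 - r)) =
      ∑' n : ℕ, (1 / (n + 1 : ℝ) - 1 / ((n + 1 : ℝ) + a)) := by
  have ha' : -1 < a := by linarith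
  have hnorm (n : ℕ) :
      ∫ r in Ioo (0 : ℝ) 1, ‖a / (n + 1) * r ^ (a + n)‖ =
        1 / (n + 1 : ℝ) - 1 / ((n + 1 : ℝ) + a) := by
    rw [← integral_rpow_term ha' n]
    refine setIntegral_congr_fun measurableSet_Ioo fun r hr => norm_of_nonneg ?_
    have := hr.1
    positivity
  calc ∫ r in Ioo (0 : ℝ) 1, -(a * r ^ (a - 1) * log (1 - r))
      = ∫ r in Ioo (0 : ℝ) 1, ∑' n : ℕ, a / (n + 1) * r ^ (a + n) :=
        setIntegral_congr_fun measurableSet_Ioo fun r hr =>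
          (hasSum_rpow_mul_neg_log_one_sub a hr).tsum_eq.symm
    _ = ∑' n : ℕ, ∫ r in Ioo (0 : ℝ) 1, a / (n + 1) * r ^ (a + n) :=
        (integral_tsum_of_summable_integral_norm (integrableOn_rpow_term ha')
          ((summable_one_div_nat_succ_sub_one_div_add ha).congr fun n => (hnorm n).symm)).symm
    _ = ∑' n : ℕ, (1 / (n + 1 : ℝ) - 1 / ((n + 1 : ℝ) + a)) :=
        tsum_congr (integral_rpow_term ha')

/-- Expected score of a watermarked token: for `p ∈ (0,1]`,
`∫₀¹ -(1/p) r^(1/p-1) log(1-r) dr` equals the generalized harmonic number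
`H_{1/p} = ∑_{n ≥ 1} (1/n - 1/(n + 1/p))`. -/
theorem beta_expected_score_eq_harmonic (p : ℝ) (hp : p ∈ Set.Ioc (0 : ℝ) 1) :
    ∫ r in Set.Ioo (0 : ℝ) 1, -((1 / p) * r ^ (1 / p - 1) * Real.log (1 - r)) =
      ∑' n : ℕ, (1 / (n + 1 : ℝ) - 1 / ((n + 1 : ℝ) + 1 / p)) :=
  integral_neg_rpow_mul_log_one_sub (one_div_nonneg.2 hp.1.le)
end

section
/- For p in (0,1], the generalized harmonic number H_{1/p} = sum_{n>=1} (1/n - 1/(n + 1/p)) satisfies H_{1/p} >= 1 + (pi^2/6 - 1) * (-p ln p). -/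
/-!
With `c = 1/p`, split each term as `(1/(n+1) - 1/(n+2)) + (1/(n+2) - 1/(n+1+c))`. The first parts
telescope to `1`. Since `(n+1)(c-1) ≥ 0`, the second part is at least `(1 - p)/(n+2)^2`, and these
sum to `(π²/6 - 1)(1 - p)` by the Basel identity. Finally `1 - p ≥ -p log p` is `log x ≤ x - 1`
at `x = 1/p`.
-/

open Real

open Filter Topology in
lemma Antitone.hasSum_sub_succ {f : ℕ → ℝ} (hf : Antitone f) {l : ℝ}
    (hl : Tendsto f atTop (𝓝 l)) : HasSum (fun n ↦ f n - f (n + 1)) (f 0 - l) := by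
  rw [hasSum_iff_tendsto_nat_of_nonneg fun n ↦ sub_nonneg.2 (hf n.le_succ)]
  simp_rw [Finset.sum_range_sub']
  exact tendsto_const_nhds.sub hl

lemma hasSum_one_div_succ_sub_one_div_succ_succ :
    HasSum (fun n : ℕ ↦ 1 / ((n : ℝ) + 1) - 1 / ((n : ℝ) + 2)) 1 := by
  have hanti : Antitone fun n : ℕ ↦ 1 / ((n : ℝ) + 1) := fun m n hmn ↦
    one_div_le_one_div_of_le (by positivity) (by gcongr)
  convert hanti.hasSum_sub_succ tendsto_one_div_add_atTop_nhds_zero_nat using 1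
  · ext n; push_cast; ring
  · simp

lemma hasSum_one_div_add_two_sq : HasSum (fun n : ℕ ↦ 1 / ((n : ℝ) + 2) ^ 2) (π ^ 2 / 6 - 1) := by
  have h := (hasSum_nat_add_iff' 2).2 hasSum_zeta_two
  norm_num [Finset.sum_range_succ] at h ⊢
  exact h

lemma one_div_sub_one_div_add_le {x c : ℝ} (hx : 0 < x) (hc : 0 ≤ c) :
    1 / x - 1 / (x + c) ≤ c * (1 / x ^ 2) := by
  rw [div_sub_div _ _ hx.ne' (by positivity), mul_one_div,
    div_le_div_iff₀ (by positivity) (by positivity)]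
  nlinarith [mul_nonneg (mul_nonneg hc hc) hx.le]

lemma summable_one_div_sub_one_div_add {c : ℝ} (hc : 0 ≤ c) :
    Summable fun n : ℕ ↦ 1 / ((n : ℝ) + 1) - 1 / ((n : ℝ) + 1 + c) := by
  have hsq : Summable fun n : ℕ ↦ 1 / ((n : ℝ) + 1) ^ 2 := by
    simpa using (summable_nat_add_iff 1).2 (Real.summable_one_div_nat_pow.2 one_lt_two)
  refine (hsq.mul_left c).of_nonneg_of_le (fun n ↦ ?_)
    fun n ↦ one_div_sub_one_div_add_le (by positivity) hc
  exact sub_nonneg.2 (one_div_le_one_div_of_le (by positivity) (by linarith))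

lemma one_sub_inv_mul_one_div_sq_le {x c : ℝ} (hx : 0 ≤ x) (hc : 1 ≤ c) :
    (1 - c⁻¹) * (1 / (x + 1) ^ 2) ≤ 1 / (x + 1) - 1 / (x + c) := by
  have hc0 : 0 < c := by linarith
  calc (1 - c⁻¹) * (1 / (x + 1) ^ 2) = (c - 1) / (c * (x + 1) ^ 2) := by field_simp
    _ ≤ (c - 1) / ((x + 1) * (x + c)) :=
      div_le_div_of_nonneg_left (by linarith) (by positivity)
        (by nlinarith [mul_nonneg (mul_nonneg hx (sub_nonneg.2 hc)) (by positivity : 0 ≤ x + 1)])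
    _ = 1 / (x + 1) - 1 / (x + c) := by field_simp; ring

lemma neg_mul_log_le_one_sub {p : ℝ} (hp : 0 < p) : -(p * log p) ≤ 1 - p := by
  nlinarith [one_sub_inv_le_log_of_pos hp, mul_inv_cancel₀ hp.ne']

lemma one_add_mul_one_sub_inv_le_tsum {c : ℝ} (hc : 1 ≤ c) :
    1 + (π ^ 2 / 6 - 1) * (1 - c⁻¹) ≤ ∑' n : ℕ, (1 / ((n : ℝ) + 1) - 1 / ((n : ℝ) + 1 + c)) := by
  have h := hasSum_one_div_succ_sub_one_div_succ_succ.add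
    (hasSum_one_div_add_two_sq.mul_left (1 - c⁻¹))
  calc 1 + (π ^ 2 / 6 - 1) * (1 - c⁻¹)
      = ∑' n : ℕ,
          (1 / ((n : ℝ) + 1) - 1 / ((n : ℝ) + 2) + (1 - c⁻¹) * (1 / ((n : ℝ) + 2) ^ 2)) := by
        rw [h.tsum_eq]; ring
    _ ≤ _ := by
      refine h.summable.tsum_le_tsum (fun n ↦ ?_) (summable_one_div_sub_one_div_add (by linarith))
      have hn := one_sub_inv_mul_one_div_sq_le (x := (n : ℝ) + 1) (by positivity) hc
      rw [show (n : ℝ) + 1 + 1 = n + 2 by ring] at hn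
      linarith

/-- Single-token expected-score bound: for `p ∈ (0,1]`, the generalized harmonic number
`H_{1/p} = ∑_{n ≥ 1} (1/n - 1/(n + 1/p))` satisfies
`H_{1/p} ≥ 1 + (π²/6 - 1) (-p log p)`. -/
theorem harmonic_ge_one_add_entropy (p : ℝ) (hp : p ∈ Set.Ioc (0 : ℝ) 1) :
    (∑' n : ℕ, (1 / (n + 1 : ℝ) - 1 / ((n + 1 : ℝ) + 1 / p))) ≥
      1 + (π ^ 2 / 6 - 1) * (-(p * Real.log p)) := by
  obtain ⟨hp0, hp1⟩ := hp
  have h := one_add_mul_one_sub_inv_le_tsum (one_le_one_div hp0 hp1)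
  rw [inv_div, div_one] at h
  have hπ : 0 ≤ π ^ 2 / 6 - 1 := by nlinarith [pi_gt_three]
  exact le_trans (by gcongr; exact neg_mul_log_le_one_sub hp0) h
end

section
/- Consider adaptive skip: first sample V* with P(V* = v) = p_v, and conditionally on V* = v let R_v ~ Beta(1/p_v, 1); if R_v < tau (tau in (0,1)), discard and resample a token from p independently. Then the output distribution is P(output = v) = p_v (1 - tau^{1/p_v} + sum_w p_w tau^{1/p_w}), and this equals p_v for all v if and only if p is the uniform distribution. -/
open MeasureTheory ProbabilityTheory Real

/-- Adaptive skip is not distortion-free: with `P(V* = v) = p v`, conditional law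
`R | V* = v ~ Beta(1/p v, 1)`, and an independent resample `X ~ p` used when `R < τ`,
the output `Y` satisfies `P(Y = v) = p v (1 - τ^(1/p v) + ∑ w, p w τ^(1/p w))`, and
this equals `p v` for all `v` iff `p` is uniform. -/
theorem adaptive_skip_output_distribution
    {Ω : Type*} [MeasurableSpace Ω] (μ : Measure Ω) [IsProbabilityMeasure μ]
    {ι : Type*} [Fintype ι] [Nonempty ι] [MeasurableSpace ι] [MeasurableSingletonClass ι]
    (p : ι → ℝ) (hp : ∀ v, 0 < p v) (hsum : ∑ v, p v = 1)
    (τ : ℝ) (hτ : τ ∈ Set.Ioo (0 : ℝ) 1)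
    (Vstar : Ω → ι) (hV : Measurable Vstar)
    (hVlaw : ∀ v, μ {ω | Vstar ω = v} = ENNReal.ofReal (p v))
    (R : Ω → ℝ) (hR : Measurable R)
    (hcond : ∀ v, ∀ r ∈ Set.Icc (0 : ℝ) 1,
      μ[|Vstar ⁻¹' {v}] {ω | R ω ≤ r} = ENNReal.ofReal (r ^ (1 / p v)))
    (X : Ω → ι) (hX : Measurable X)
    (hXlaw : ∀ v, μ {ω | X ω = v} = ENNReal.ofReal (p v))
    (hXindep : IndepFun (fun ω => (Vstar ω, R ω)) X μ)
    (Y : Ω → ι) (hY : Y = fun ω => if R ω < τ then X ω else Vstar ω) :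
    (∀ v, μ {ω | Y ω = v} =
      ENNReal.ofReal (p v * (1 - τ ^ (1 / p v) + ∑ w, p w * τ ^ (1 / p w)))) ∧
    ((∀ v, μ {ω | Y ω = v} = ENNReal.ofReal (p v)) ↔
      ∀ v, p v = 1 / (Fintype.card ι : ℝ)) := by
  obtain ⟨hτ0, hτ1⟩ := hτ
  set S : ℝ := ∑ w, p w * τ ^ (1 / p w) with hS
  have htpos : ∀ v, (0:ℝ) < τ ^ (1 / p v) := fun v => Real.rpow_pos_of_pos hτ0 _
  have htlt : ∀ v, τ ^ (1 / p v) < 1 := fun v =>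
    Real.rpow_lt_one hτ0.le hτ1 (by have := hp v; positivity)
  have hS_pos : 0 < S := by
    rw [hS]
    apply Finset.sum_pos (fun w _ => mul_pos (hp w) (htpos w)) Finset.univ_nonempty
  have hmV : ∀ v, MeasurableSet {ω | Vstar ω = v} := fun v => hV (measurableSet_singleton v)
  have hmRlt : MeasurableSet {ω | R ω < τ} := hR measurableSet_Iio
  have hs0 : ∀ v, μ {ω | Vstar ω = v} ≠ 0 := by
    intro v
    rw [hVlaw v]
    simp [ENNReal.ofReal_eq_zero, not_le, hp v]
  have hsT : ∀ v, μ {ω | Vstar ω = v} ≠ ⊤ := fun v => measure_ne_top μ _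
  -- Step A: joint CDF
  have hA : ∀ v, ∀ r ∈ Set.Icc (0:ℝ) 1,
      μ ({ω | Vstar ω = v} ∩ {ω | R ω ≤ r}) =
        ENNReal.ofReal (p v) * ENNReal.ofReal (r ^ (1 / p v)) := by
    intro v r hr
    have h := hcond v r hr
    rw [cond_apply (hV (measurableSet_singleton v) : MeasurableSet (Vstar ⁻¹' {v}))] at h
    rw [show Vstar ⁻¹' {v} = {ω | Vstar ω = v} from rfl] at h
    calc μ ({ω | Vstar ω = v} ∩ {ω | R ω ≤ r})
        = μ {ω | Vstar ω = v} * ((μ {ω | Vstar ω = v})⁻¹ *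
            μ ({ω | Vstar ω = v} ∩ {ω | R ω ≤ r})) := by
          rw [← mul_assoc, ENNReal.mul_inv_cancel (hs0 v) (hsT v), one_mul]
      _ = μ {ω | Vstar ω = v} * ENNReal.ofReal (r ^ (1 / p v)) := by rw [h]
      _ = ENNReal.ofReal (p v) * ENNReal.ofReal (r ^ (1 / p v)) := by rw [hVlaw v]
  -- Step B: strict inequality via limit
  have hB : ∀ v, μ ({ω | Vstar ω = v} ∩ {ω | R ω < τ}) =
      ENNReal.ofReal (p v) * ENNReal.ofReal (τ ^ (1 / p v)) := by
    intro v
    set u : ℕ → ℝ := fun n => τ - τ / (n + 1) with hu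
    have h1n : ∀ n : ℕ, (0:ℝ) < (n:ℝ) + 1 := fun n => by positivity
    have hu_lt : ∀ n, u n < τ := fun n =>
      sub_lt_self τ (div_pos hτ0 (h1n n))
    have hu_mem : ∀ n, u n ∈ Set.Icc (0:ℝ) 1 := by
      intro n
      have h2 : τ / ((n:ℝ)+1) ≤ τ := div_le_self hτ0.le (by
        have := Nat.cast_nonneg (α := ℝ) n; linarith)
      have h3 : 0 ≤ τ / ((n:ℝ)+1) := le_of_lt (div_pos hτ0 (h1n n))
      exact ⟨by simp only [hu]; linarith, by simp only [hu]; linarith⟩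
    have hu_mono : Monotone u := by
      intro m n hmn
      have hc : ((m:ℝ)+1) ≤ (n:ℝ)+1 := by
        have : (m:ℝ) ≤ (n:ℝ) := Nat.cast_le.mpr hmn
        linarith
      have : τ / ((n:ℝ)+1) ≤ τ / ((m:ℝ)+1) := by
        apply div_le_div_of_nonneg_left hτ0.le (h1n m) hc
      simp only [hu]; linarith
    have hmono : Monotone (fun n => {ω | Vstar ω = v} ∩ {ω | R ω ≤ u n}) := by
      intro m n hmn ω hω
      exact ⟨hω.1, le_trans hω.2 (hu_mono hmn)⟩
    have hUnion : (⋃ n, ({ω | Vstar ω = v} ∩ {ω | R ω ≤ u n})) =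
        {ω | Vstar ω = v} ∩ {ω | R ω < τ} := by
      ext ω
      simp only [Set.mem_iUnion, Set.mem_inter_iff, Set.mem_setOf_eq]
      constructor
      · rintro ⟨n, hv, hr⟩
        exact ⟨hv, lt_of_le_of_lt hr (hu_lt n)⟩
      · rintro ⟨hv, hr⟩
        by_cases h0 : R ω ≤ 0
        · refine ⟨0, hv, ?_⟩
          simp only [hu]
          norm_num
          linarith
        · push_neg at h0
          obtain ⟨n, hn⟩ := exists_nat_one_div_lt (div_pos (sub_pos.mpr hr) hτ0)
          have h1 : τ * (1/((n:ℝ)+1)) < τ * ((τ - R ω)/τ) :=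
            (mul_lt_mul_iff_right₀ hτ0).mpr hn
          rw [mul_div_cancel₀ _ hτ0.ne'] at h1
          have h2 : τ / ((n:ℝ)+1) = τ * (1/((n:ℝ)+1)) := by ring
          refine ⟨n, hv, ?_⟩
          simp only [hu]
          linarith
    have htend := tendsto_measure_iUnion_atTop (μ := μ) hmono
    rw [hUnion] at htend
    have h2 : Filter.Tendsto (fun n => μ ({ω | Vstar ω = v} ∩ {ω | R ω ≤ u n}))
        Filter.atTop (nhds (ENNReal.ofReal (p v) * ENNReal.ofReal (τ ^ (1 / p v)))) := by
      have heq : ∀ n, μ ({ω | Vstar ω = v} ∩ {ω | R ω ≤ u n}) =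
          ENNReal.ofReal (p v) * ENNReal.ofReal ((u n) ^ (1 / p v)) :=
        fun n => hA v (u n) (hu_mem n)
      simp only [heq]
      have hu_tend : Filter.Tendsto u Filter.atTop (nhds τ) := by
        have hd : Filter.Tendsto (fun n : ℕ => τ / ((n:ℝ) + 1)) Filter.atTop (nhds 0) := by
          apply Filter.Tendsto.div_atTop (tendsto_const_nhds (x := τ))
          exact Filter.tendsto_atTop_add_const_right _ 1 tendsto_natCast_atTop_atTop
        have := Filter.Tendsto.const_sub τ hd
        simpa using this
      have hrpow : Filter.Tendsto (fun n => (u n) ^ (1 / p v)) Filter.atTop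
          (nhds (τ ^ (1 / p v))) := by
        have hc : ContinuousAt (fun x : ℝ => x ^ (1 / p v)) τ :=
          Real.continuousAt_rpow_const τ _ (Or.inl hτ0.ne')
        exact hc.tendsto.comp hu_tend
      exact ENNReal.Tendsto.const_mul ((ENNReal.continuous_ofReal.tendsto _).comp hrpow)
        (Or.inr ENNReal.ofReal_ne_top)
    exact tendsto_nhds_unique htend h2
  -- Step C: total skip probability
  have hC : μ {ω | R ω < τ} = ENNReal.ofReal S := by
    have hcover : {ω | R ω < τ} = ⋃ v, ({ω | Vstar ω = v} ∩ {ω | R ω < τ}) := by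
      ext ω
      simp
    rw [hcover, measure_iUnion]
    · rw [tsum_fintype]
      calc ∑ v, μ ({ω | Vstar ω = v} ∩ {ω | R ω < τ})
          = ∑ v, ENNReal.ofReal (p v * τ ^ (1 / p v)) := by
            refine Finset.sum_congr rfl fun v _ => ?_
            rw [hB v, ← ENNReal.ofReal_mul (hp v).le]
        _ = ENNReal.ofReal S := by
            rw [hS, ENNReal.ofReal_sum_of_nonneg
              (fun w _ => le_of_lt (mul_pos (hp w) (htpos w)))]
    · intro a b hab
      apply Set.disjoint_left.mpr
      rintro ω ⟨ha, -⟩ ⟨hb, -⟩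
      exact hab (ha.symm.trans hb)
    · exact fun v => (hmV v).inter hmRlt
  -- Step D: independence
  have hD : ∀ v, μ ({ω | R ω < τ} ∩ {ω | X ω = v}) =
      ENNReal.ofReal S * ENNReal.ofReal (p v) := by
    intro v
    have h := hXindep.measure_inter_preimage_eq_mul (Set.univ ×ˢ Set.Iio τ) {v}
      (MeasurableSet.univ.prod measurableSet_Iio) (measurableSet_singleton v)
    have hpre : (fun ω => (Vstar ω, R ω)) ⁻¹' (Set.univ ×ˢ Set.Iio τ) = {ω | R ω < τ} := by
      ext ω
      simp [Set.mem_prod]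
    rw [hpre] at h
    have hpre2 : X ⁻¹' {v} = {ω | X ω = v} := rfl
    rw [hpre2] at h
    rw [h, hC, hXlaw v]
  -- Step E: no-skip part
  have hE : ∀ v, μ ({ω | Vstar ω = v} ∩ {ω | ¬ R ω < τ}) =
      ENNReal.ofReal (p v - p v * τ ^ (1 / p v)) := by
    intro v
    have hsplit := measure_inter_add_diff (μ := μ) {ω | Vstar ω = v} hmRlt
    have hdiff : {ω | Vstar ω = v} \ {ω | R ω < τ} =
        {ω | Vstar ω = v} ∩ {ω | ¬ R ω < τ} := rfl
    rw [hdiff, hVlaw v, hB v] at hsplit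
    have hfin : ENNReal.ofReal (p v) * ENNReal.ofReal (τ ^ (1 / p v)) ≠ ⊤ :=
      ENNReal.mul_ne_top ENNReal.ofReal_ne_top ENNReal.ofReal_ne_top
    have : μ ({ω | Vstar ω = v} ∩ {ω | ¬ R ω < τ}) =
        ENNReal.ofReal (p v) - ENNReal.ofReal (p v) * ENNReal.ofReal (τ ^ (1 / p v)) := by
      rw [add_comm] at hsplit
      exact ENNReal.eq_sub_of_add_eq hfin hsplit
    rw [this, ← ENNReal.ofReal_mul (hp v).le,
      ← ENNReal.ofReal_sub _ (mul_pos (hp v) (htpos v)).le]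
  -- Main formula
  have hmain : ∀ v, μ {ω | Y ω = v} =
      ENNReal.ofReal (p v * (1 - τ ^ (1 / p v) + S)) := by
    intro v
    have hset : {ω | Y ω = v} =
        ({ω | R ω < τ} ∩ {ω | X ω = v}) ∪ ({ω | Vstar ω = v} ∩ {ω | ¬ R ω < τ}) := by
      ext ω
      by_cases h : R ω < τ
      · simp [hY, h]
      · simp only [hY, Set.mem_setOf_eq, Set.mem_union, Set.mem_inter_iff, if_neg h]
        constructor
        · intro hv; exact Or.inr ⟨hv, h⟩
        · rintro (⟨hr, -⟩ | ⟨hv, -⟩)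
          · exact absurd hr h
          · exact hv
    have hdisj : Disjoint ({ω | R ω < τ} ∩ {ω | X ω = v})
        ({ω | Vstar ω = v} ∩ {ω | ¬ R ω < τ}) := by
      apply Set.disjoint_left.mpr
      rintro ω ⟨h1, -⟩ ⟨-, h2⟩
      exact h2 h1
    have hmeas : MeasurableSet ({ω | Vstar ω = v} ∩ {ω | ¬ R ω < τ}) :=
      (hmV v).inter hmRlt.compl
    rw [hset, measure_union hdisj hmeas, hD v, hE v,
      ← ENNReal.ofReal_mul hS_pos.le,
      ← ENNReal.ofReal_add (mul_pos hS_pos (hp v)).le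
        (by nlinarith [htlt v, hp v, htpos v])]
    congr 1
    ring
  refine ⟨hmain, ?_, ?_⟩
  · -- forward: distortion-free implies uniform
    intro h v
    have key : ∀ w, τ ^ (1 / p w) = S := by
      intro w
      have h1 := (hmain w).symm.trans (h w)
      have hnn : 0 ≤ p w * (1 - τ ^ (1 / p w) + S) := by
        nlinarith [htlt w, hp w, hS_pos]
      have h2 : p w * (1 - τ ^ (1 / p w) + S) = p w :=
        (ENNReal.ofReal_eq_ofReal_iff hnn (hp w).le).mp h1
      have h3 : p w * (1 - τ ^ (1 / p w) + S) = p w * 1 := by linarith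
      have h4 := mul_left_cancel₀ (hp w).ne' h3
      linarith
    have hsa : StrictAnti (fun y : ℝ => τ ^ y) := fun a b hab =>
      Real.rpow_lt_rpow_of_exponent_gt hτ0 hτ1 hab
    have hall : ∀ w, p w = p v := by
      intro w
      have he : τ ^ (1 / p w) = τ ^ (1 / p v) := (key w).trans (key v).symm
      have : 1 / p w = 1 / p v := hsa.injective he
      have hpw := hp w; have hpv := hp v
      field_simp at this
      linarith
    have hsum2 : (Fintype.card ι : ℝ) * p v = 1 := by
      rw [← hsum, Finset.sum_congr rfl (fun w _ => hall w)]
      simp [Finset.sum_const, Finset.card_univ, mul_comm]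
    have hcard : (0:ℝ) < (Fintype.card ι : ℝ) := by
      exact_mod_cast Fintype.card_pos
    field_simp
    linarith
  · -- reverse: uniform implies distortion-free
    intro hunif v
    rw [hmain v]
    congr 1
    have hT : ∀ w, τ ^ (1 / p w) = τ ^ (1 / p v) := fun w => by rw [hunif w, hunif v]
    have hSe : S = τ ^ (1 / p v) := by
      rw [hS]
      calc ∑ w, p w * τ ^ (1 / p w)
          = ∑ w, p w * τ ^ (1 / p v) := Finset.sum_congr rfl fun w _ => by rw [hT w]
        _ = (∑ w, p w) * τ ^ (1 / p v) := by rw [← Finset.sum_mul]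
        _ = τ ^ (1 / p v) := by rw [hsum, one_mul]
    rw [hSe]
    ring
end

section
/- Let p in (0,1], tau in (0,1), and R ~ Beta(1/p, 1). Then the integral from 0 to tau of -(1/p) r^{1/p-1} ln(1-r) dr is at most -tau^{1/p} ln(1 - tau). Consequently E[-ln(1-R) * 1_{R >= tau}] >= H_{1/p} + tau^{1/p} ln(1 - tau). -/
/-!
Write `a = 1/p`, so that `a r^(a-1)` is the density of `Beta(a, 1)`. On `(0, τ)` the weight
`-log(1-r)` is at most `-log(1-τ)`, and the density integrates to `τ^a` there, which gives the
first bound. Expanding `-log(1-r) = ∑ r^(n+1)/(n+1)` and integrating term by term gives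
`E[-log(1-R)] = ∑ (1/(n+1) - 1/(n+1+a)) = H_a`; subtracting the first bound from this total
gives the second.
-/

open MeasureTheory Real Set

section

variable {a : ℝ}

theorem integral_Ioo_mul_rpow_sub_one (ha : 0 < a) {τ : ℝ} (hτ : 0 ≤ τ) :
    ∫ r in Ioo 0 τ, a * r ^ (a - 1) = τ ^ a := by
  rw [← integral_Ioc_eq_integral_Ioo, ← intervalIntegral.integral_of_le hτ,
    intervalIntegral.integral_const_mul, integral_rpow (Or.inl (by linarith)),
    sub_add_cancel, zero_rpow ha.ne', sub_zero]
  field_simp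

theorem integral_Ioo_mul_rpow_mul_pow_div (ha : 0 < a) (n : ℕ) :
    ∫ r in Ioo (0 : ℝ) 1, a * r ^ (a - 1) * (r ^ (n + 1) / (n + 1)) =
      1 / (n + 1 : ℝ) - 1 / ((n + 1 : ℝ) + a) := by
  have hn : (0 : ℝ) ≤ n := n.cast_nonneg
  have hpow : EqOn (fun r : ℝ => a * r ^ (a - 1) * (r ^ (n + 1) / (n + 1)))
      (fun r => a / (n + 1) * r ^ (a - 1 + (n + 1 : ℕ))) (Ioo 0 1) := fun r hr => by
    simp only [rpow_add_natCast hr.1.ne']; ring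
  have hexp : a - 1 + ((n + 1 : ℕ) : ℝ) + 1 = n + 1 + a := by push_cast; ring
  rw [setIntegral_congr_fun measurableSet_Ioo hpow, ← integral_Ioc_eq_integral_Ioo,
    ← intervalIntegral.integral_of_le zero_le_one, intervalIntegral.integral_const_mul,
    integral_rpow (Or.inl (by push_cast; linarith)), hexp, one_rpow, zero_rpow (by linarith),
    sub_zero]
  field_simp
  ring

theorem summable_one_div_add_one_sub_one_div_add_one_add (ha : 0 ≤ a) :
    Summable fun n : ℕ => 1 / (n + 1 : ℝ) - 1 / ((n + 1 : ℝ) + a) := by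
  have hbound : Summable fun n : ℕ => a * (1 / ((n + 1 : ℕ) : ℝ) ^ 2) :=
    ((summable_nat_add_iff 1).2 (Real.summable_one_div_nat_pow.2 one_lt_two)).mul_left a
  refine .of_nonneg_of_le (fun n => ?_) (fun n => ?_) hbound
  · exact sub_nonneg.2 (one_div_le_one_div_of_le (by positivity) (by linarith))
  · have hn : (0 : ℝ) < n + 1 := by positivity
    calc 1 / (n + 1 : ℝ) - 1 / ((n + 1 : ℝ) + a) = a / ((n + 1) * ((n + 1) + a)) := by
          field_simp; ring
      _ ≤ a * (1 / ((n + 1 : ℕ) : ℝ) ^ 2) := by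
          rw [mul_one_div]; push_cast; gcongr; nlinarith

theorem integral_Ioo_mul_rpow_mul_neg_log_one_sub (ha : 0 < a) :
    ∫ r in Ioo (0 : ℝ) 1, a * r ^ (a - 1) * -log (1 - r) =
      ∑' n : ℕ, (1 / (n + 1 : ℝ) - 1 / ((n + 1 : ℝ) + a)) := by
  set g : ℕ → ℝ → ℝ := fun n r => a * r ^ (a - 1) * (r ^ (n + 1) / (n + 1))
  have hg_nonneg : ∀ n, ∀ r ∈ Ioo (0 : ℝ) 1, 0 ≤ g n r := fun n r hr => by
    have := rpow_nonneg hr.1.le (a - 1)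
    have := hr.1.le
    positivity
  have hg_int (n : ℕ) : IntegrableOn (g n) (Ioo 0 1) := by
    refine (intervalIntegrable_iff_integrableOn_Ioo_of_le zero_le_one).1 ?_
    exact ((intervalIntegral.intervalIntegrable_rpow' (by linarith)).const_mul a)
      |>.mul_continuousOn (by fun_prop)
  have hg_norm (n : ℕ) :
      ∫ r in Ioo (0 : ℝ) 1, ‖g n r‖ = 1 / (n + 1 : ℝ) - 1 / ((n + 1 : ℝ) + a) := by
    rw [← integral_Ioo_mul_rpow_mul_pow_div ha n]
    exact setIntegral_congr_fun measurableSet_Ioo fun r hr => norm_of_nonneg (hg_nonneg n r hr)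
  have hg_sum := hasSum_integral_of_summable_integral_norm hg_int
    (by simpa only [hg_norm] using summable_one_div_add_one_sub_one_div_add_one_add ha.le)
  calc ∫ r in Ioo (0 : ℝ) 1, a * r ^ (a - 1) * -log (1 - r)
      = ∫ r in Ioo (0 : ℝ) 1, ∑' n, g n r :=
        setIntegral_congr_fun measurableSet_Ioo fun r hr =>
          ((hasSum_pow_div_log_of_abs_lt_one (by rw [abs_of_pos hr.1]; exact hr.2)).mul_left
            (a * r ^ (a - 1))).tsum_eq.symm
    _ = ∑' n, ∫ r in Ioo (0 : ℝ) 1, g n r := hg_sum.tsum_eq.symm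
    _ = _ := tsum_congr (integral_Ioo_mul_rpow_mul_pow_div ha)

theorem integrableOn_mul_rpow_mul_neg_log_one_sub (ha : 1 ≤ a) :
    IntegrableOn (fun r => a * r ^ (a - 1) * -log (1 - r)) (Ioo 0 1) := by
  have hlog : IntegrableOn (fun r => -log (1 - r)) (Ioo 0 1) := by
    refine (intervalIntegrable_iff_integrableOn_Ioo_of_le zero_le_one).1 ?_
    simpa using (intervalIntegral.intervalIntegrable_log' (a := 1) (b := 0)).neg.comp_sub_left 1
  refine hlog.bdd_mul (c := a) (by fun_prop) ?_
  filter_upwards [ae_restrict_mem measurableSet_Ioo] with r hr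
  rw [norm_of_nonneg (by have := rpow_nonneg hr.1.le (a - 1); positivity)]
  exact mul_le_of_le_one_right (by linarith) (rpow_le_one hr.1.le hr.2.le (by linarith))

theorem setIntegral_Ioo_mul_rpow_mul_neg_log_one_sub_le (ha : 0 < a) {τ : ℝ}
    (hτ : τ ∈ Ioo (0 : ℝ) 1) :
    ∫ r in Ioo 0 τ, a * r ^ (a - 1) * -log (1 - r) ≤ τ ^ a * -log (1 - τ) := by
  have hdens : IntervalIntegrable (fun r => a * r ^ (a - 1)) volume 0 τ :=
    (intervalIntegral.intervalIntegrable_rpow' (by linarith)).const_mul a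
  have hf : IntegrableOn (fun r => a * r ^ (a - 1) * -log (1 - r)) (Ioo 0 τ) := by
    refine (intervalIntegrable_iff_integrableOn_Ioo_of_le hτ.1.le).1 ?_
    refine hdens.mul_continuousOn (continuousOn_log.comp (by fun_prop) ?_).neg
    intro r hr
    rw [uIcc_of_le hτ.1.le] at hr
    exact ne_of_gt (by linarith [hr.2, hτ.2])
  calc ∫ r in Ioo 0 τ, a * r ^ (a - 1) * -log (1 - r)
      ≤ ∫ r in Ioo 0 τ, a * r ^ (a - 1) * -log (1 - τ) := by
        refine setIntegral_mono_on hf ?_ measurableSet_Ioo fun r hr => ?_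
        · exact ((intervalIntegrable_iff_integrableOn_Ioo_of_le hτ.1.le).1 hdens).mul_const _
        · have := rpow_nonneg hr.1.le (a - 1)
          gcongr
          case h => exact hr.2.le
          case hx => linarith [hτ.2]
    _ = τ ^ a * -log (1 - τ) := by
        rw [integral_mul_const, integral_Ioo_mul_rpow_sub_one ha hτ.1.le]

end

/-- Adaptive-skip score bound: for `p ∈ (0,1]`, `τ ∈ (0,1)` and `R ~ Beta(1/p, 1)`,
`∫₀^τ -(1/p) r^(1/p-1) log(1-r) dr ≤ -τ^(1/p) log(1-τ)`, hence
`E[-log(1-R) · 1_{R ≥ τ}] ≥ H_{1/p} + τ^(1/p) log(1-τ)`. -/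
theorem adaptive_skip_retained_score_bound
    (p τ : ℝ) (hp : p ∈ Set.Ioc (0 : ℝ) 1) (hτ : τ ∈ Set.Ioo (0 : ℝ) 1) :
    (∫ r in Set.Ioo (0 : ℝ) τ, -((1 / p) * r ^ (1 / p - 1) * Real.log (1 - r)) ≤
      -(τ ^ (1 / p)) * Real.log (1 - τ)) ∧
    (∫ r in Set.Ico τ 1, (1 / p) * r ^ (1 / p - 1) * (-Real.log (1 - r)) ≥
      (∑' n : ℕ, (1 / (n + 1 : ℝ) - 1 / ((n + 1 : ℝ) + 1 / p))) +
        τ ^ (1 / p) * Real.log (1 - τ)) := by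
  have ha : 1 ≤ 1 / p := one_le_one_div hp.1 hp.2
  have hhead := setIntegral_Ioo_mul_rpow_mul_neg_log_one_sub_le (by linarith) hτ
  have hf := integrableOn_mul_rpow_mul_neg_log_one_sub ha
  have hsplit : ∫ r in Ioo (0 : ℝ) 1, 1 / p * r ^ (1 / p - 1) * -log (1 - r) =
      (∫ r in Ioo 0 τ, 1 / p * r ^ (1 / p - 1) * -log (1 - r)) +
        ∫ r in Ico τ 1, 1 / p * r ^ (1 / p - 1) * -log (1 - r) := by
    rw [← Ioo_union_Ico_eq_Ioo hτ.1 hτ.2.le]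
    exact setIntegral_union (disjoint_left.2 fun r hr hr' => hr.2.not_ge hr'.1)
      measurableSet_Ico (hf.mono_set (Ioo_subset_Ioo_right hτ.2.le))
      (hf.mono_set (Ico_subset_Ioo_left hτ.1))
  rw [integral_Ioo_mul_rpow_mul_neg_log_one_sub (by linarith)] at hsplit
  constructor
  · simpa only [mul_neg, neg_mul] using hhead
  · linarith
end
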